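/- Let w be a word over A = {x, y, e} that is irreducible with respect to the rewriting system e³ → e, xey → y, xe²y → x, xy → 1. Then the image of w in the monoid M presented by ⟨x, y, e | e³ = e, xey = y, xe²y = x, xy = 1⟩ is right-invertible if and only if w is either the empty word or a word of the form x·u with u ∈ {e, x}* and w contains no factor e³. -/
import Mathlib


/-- The alphabet `A = {x, y, e}`. -/
inductive Alpha : Type
  | x | y | e
  deriving DecidableEq

/-- The defining relations `e³ = e`, `xey = y`, `xe²y = x`, `xy = 1`. -/
def rel : FreeMonoid Alpha → FreeMonoid Alpha → Prop := fun a b =>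
  (a = .of .e * .of .e * .of .e ∧ b = .of .e) ∨
  (a = .of .x * .of .e * .of .y ∧ b = .of .y) ∨
  (a = .of .x * .of .e * .of .e * .of .y ∧ b = .of .x) ∨
  (a = .of .x * .of .y ∧ b = 1)

/-- The monoid `M = ⟨x, y, e | e³ = e, xey = y, xe²y = x, xy = 1⟩`. -/
abbrev M := PresentedMonoid rel

/-- The image of `x` in `M`. -/
def X : M := PresentedMonoid.of rel .x
/-- The image of `y` in `M`. -/
def Y : M := PresentedMonoid.of rel .y
/-- The image of `e` in `M`. -/
def E : M := PresentedMonoid.of rel .e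

/-- The one-step rewriting relation on the free monoid `A*`:
`u·ℓ·v → u·r·v` for each rule `(ℓ, r)`. -/
def Step : FreeMonoid Alpha → FreeMonoid Alpha → Prop := fun a b =>
  ∃ u v l r : FreeMonoid Alpha, rel l r ∧ a = u * l * v ∧ b = u * r * v

set_option linter.unnecessarySeqFocus false

/-! helpers -/

def Bad (l : List Alpha) : Prop :=
  l = [.e,.e,.e] ∨ l = [.x,.e,.y] ∨ l = [.x,.e,.e,.y] ∨ l = [.x,.y]

def Irr (w : List Alpha) : Prop := ∀ u l v : List Alpha, Bad l → w ≠ u ++ l ++ v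

lemma irr_of_hw (w : FreeMonoid Alpha) (hw : ¬ ∃ w' : FreeMonoid Alpha, Step w w') :
    Irr w.toList := by
  intro u l v hl he
  apply hw
  rcases hl with h | h | h | h
  · subst h
    have hrel : rel (.of .e * .of .e * .of .e) (.of .e) := Or.inl ⟨rfl, rfl⟩
    refine ⟨FreeMonoid.ofList u * FreeMonoid.of .e * FreeMonoid.ofList v, ?_⟩
    unfold Step
    refine ⟨FreeMonoid.ofList u, FreeMonoid.ofList v, _, _, hrel, ?_, rfl⟩
    exact he
  · subst h
    have hrel : rel (.of .x * .of .e * .of .y) (.of .y) := Or.inr (Or.inl ⟨rfl, rfl⟩)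
    refine ⟨FreeMonoid.ofList u * FreeMonoid.of .y * FreeMonoid.ofList v, ?_⟩
    unfold Step
    refine ⟨FreeMonoid.ofList u, FreeMonoid.ofList v, _, _, hrel, ?_, rfl⟩
    exact he
  · subst h
    have hrel : rel (.of .x * .of .e * .of .e * .of .y) (.of .x) :=
      Or.inr (Or.inr (Or.inl ⟨rfl, rfl⟩))
    refine ⟨FreeMonoid.ofList u * FreeMonoid.of .x * FreeMonoid.ofList v, ?_⟩
    unfold Step
    refine ⟨FreeMonoid.ofList u, FreeMonoid.ofList v, _, _, hrel, ?_, rfl⟩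
    exact he
  · subst h
    have hrel : rel (.of .x * .of .y) 1 := Or.inr (Or.inr (Or.inr ⟨rfl, rfl⟩))
    refine ⟨FreeMonoid.ofList u * 1 * FreeMonoid.ofList v, ?_⟩
    unfold Step
    refine ⟨FreeMonoid.ofList u, FreeMonoid.ofList v, _, _, hrel, ?_, rfl⟩
    exact he

def fe : List Alpha → List Alpha
  | .e :: .e :: t => .e :: t
  | w => .e :: w

def fx : List Alpha → List Alpha
  | .y :: t => t
  | .e :: .y :: t => .y :: t
  | .e :: .e :: .y :: t => fx t
  | w => .x :: w

lemma fe_of_ne {w : List Alpha} (h : ∀ t, w ≠ .e :: .e :: t) : fe w = .e :: w := by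
  rw [fe.eq_def]
  split
  · rename_i t; exact absurd rfl (h t)
  · rfl

lemma fe_ne_nil (w : List Alpha) : fe w ≠ [] := by
  rw [fe.eq_def]; split <;> simp

lemma fx_of_ne {w : List Alpha} (h1 : ∀ t, w ≠ .y :: t) (h2 : ∀ t, w ≠ .e :: .y :: t)
    (h3 : ∀ t, w ≠ .e :: .e :: .y :: t) : fx w = .x :: w := by
  rw [fx.eq_def]
  split
  · rename_i t; exact absurd rfl (h1 t)
  · rename_i t; exact absurd rfl (h2 t)
  · rename_i t; exact absurd rfl (h3 t)
  · rfl

lemma irr_nil : Irr ([] : List Alpha) := by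
  rintro u l v (h|h|h|h) he <;> subst h <;> simp at he

lemma irr_tail {a : Alpha} {w : List Alpha} (h : Irr (a :: w)) : Irr w :=
  fun u l v hl he => h (a :: u) l v hl (by simp [he])

lemma irr_cons {a : Alpha} {w : List Alpha} (h : Irr w)
    (hfront : ∀ l v, Bad l → a :: w ≠ l ++ v) : Irr (a :: w) := by
  intro u l v hl he
  cases u with
  | nil => exact hfront l v hl he
  | cons b u =>
    rw [List.cons_append, List.cons_append] at he
    injection he with h1 h2
    exact h u l v hl h2

lemma irr_cons_y {w : List Alpha} (h : Irr w) : Irr (.y :: w) := by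
  refine irr_cons h ?_
  rintro l v (hl|hl|hl|hl) he <;> subst hl <;> simp at he

lemma irr_cons_e {w : List Alpha} (h : Irr w) (hne : ∀ t, w ≠ .e :: .e :: t) :
    Irr (.e :: w) := by
  refine irr_cons h ?_
  rintro l v (hl|hl|hl|hl) he <;> subst hl <;> simp at he
  exact hne v he

lemma irr_cons_x {w : List Alpha} (h : Irr w) (h1 : ∀ t, w ≠ .y :: t)
    (h2 : ∀ t, w ≠ .e :: .y :: t) (h3 : ∀ t, w ≠ .e :: .e :: .y :: t) : Irr (.x :: w) := by
  refine irr_cons h ?_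
  rintro l v (hl|hl|hl|hl) he <;> subst hl <;> simp at he
  · exact h2 v he
  · exact h3 v he
  · exact h1 v he

lemma irr_fe {w : List Alpha} (h : Irr w) : Irr (fe w) := by
  by_cases hee : ∃ t, w = .e :: .e :: t
  · obtain ⟨t, rfl⟩ := hee
    rw [show fe (.e :: .e :: t) = .e :: t from rfl]
    refine irr_cons_e (irr_tail (irr_tail h)) ?_
    rintro t' rfl
    exact h [] [.e,.e,.e] (.e :: t') (Or.inl rfl) rfl
  · push_neg at hee
    rw [fe_of_ne hee]
    refine irr_cons_e h ?_
    intro t ht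
    exact hee t ht

lemma irr_fx_aux : ∀ (n : ℕ) (w : List Alpha), w.length ≤ n → Irr w → Irr (fx w) := by
  intro n
  induction n with
  | zero =>
    intro w hl h
    have hw : w = [] := List.length_eq_zero_iff.mp (Nat.le_zero.mp hl)
    subst hw
    rw [show fx [] = [.x] from rfl]
    exact irr_cons_x irr_nil (by simp) (by simp) (by simp)
  | succ n ih =>
    intro w hl h
    by_cases c1 : ∃ t, w = .y :: t
    · obtain ⟨t, rfl⟩ := c1
      rw [show fx (.y :: t) = t from rfl]
      exact irr_tail h
    by_cases c2 : ∃ t, w = .e :: .y :: t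
    · obtain ⟨t, rfl⟩ := c2
      rw [show fx (.e :: .y :: t) = .y :: t from rfl]
      exact irr_tail h
    by_cases c3 : ∃ t, w = .e :: .e :: .y :: t
    · obtain ⟨t, rfl⟩ := c3
      rw [show fx (.e :: .e :: .y :: t) = fx t from rfl]
      refine ih t ?_ (irr_tail (irr_tail (irr_tail h)))
      simp at hl ⊢
      omega
    push_neg at c1 c2 c3
    rw [fx_of_ne c1 c2 c3]
    exact irr_cons_x h c1 c2 c3

lemma irr_fx {w : List Alpha} (h : Irr w) : Irr (fx w) :=
  irr_fx_aux w.length w le_rfl h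

lemma fe3 {w : List Alpha} (h : Irr w) : fe (fe (fe w)) = fe w := by
  by_cases hee : ∃ t, w = .e :: .e :: t
  · obtain ⟨t, rfl⟩ := hee
    have ht : ∀ t', t ≠ Alpha.e :: t' := by
      rintro t' rfl
      exact h [] [.e,.e,.e] t' (Or.inl rfl) rfl
    rw [show fe (.e :: .e :: t) = .e :: t from rfl]
    rw [show fe (.e :: t) = .e :: .e :: t from
      fe_of_ne (by rintro t' he; injection he with _ h2; exact ht _ h2)]
    rfl
  · push_neg at hee
    by_cases he1 : ∃ t, w = .e :: t
    · obtain ⟨t, rfl⟩ := he1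
      rw [fe_of_ne hee]
      rw [show fe (.e :: .e :: t) = .e :: t from rfl]
      rw [fe_of_ne hee]
    · push_neg at he1
      rw [fe_of_ne hee]
      have h1 : ∀ t', (Alpha.e :: w) ≠ Alpha.e :: Alpha.e :: t' := by
        rintro t' he; injection he with _ h2; exact he1 t' h2
      rw [fe_of_ne h1]
      rfl

/-- irreducible words -/
def S : Type := {w : List Alpha // Irr w}

def F : Alpha → Function.End S
  | .x => fun s => ⟨fx s.1, irr_fx s.2⟩
  | .y => fun s => ⟨.y :: s.1, irr_cons_y s.2⟩
  | .e => fun s => ⟨fe s.1, irr_fe s.2⟩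

lemma Frel : ∀ a b : FreeMonoid Alpha, rel a b → FreeMonoid.lift F a = FreeMonoid.lift F b := by
  intro a b hab
  rcases hab with ⟨ha, hb⟩ | ⟨ha, hb⟩ | ⟨ha, hb⟩ | ⟨ha, hb⟩ <;> subst ha <;> subst hb <;>
    simp only [map_mul, map_one, FreeMonoid.lift_eval_of] <;> funext s <;>
    refine Subtype.ext ?_
  · exact fe3 s.2
  · rfl
  · rfl
  · rfl

def phi : M →* Function.End S := PresentedMonoid.lift F Frel

lemma phi_mk (w : FreeMonoid Alpha) : phi (PresentedMonoid.mk rel w) = FreeMonoid.lift F w := rfl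

lemma noY_aux : ∀ (n : ℕ) (t : List Alpha), t.length ≤ n → Irr (.x :: t) →
    ∀ a ∈ t, a = Alpha.e ∨ a = Alpha.x := by
  intro n
  induction n with
  | zero =>
    intro t hl _ a ha
    have : t = [] := List.length_eq_zero_iff.mp (Nat.le_zero.mp hl)
    subst this; simp at ha
  | succ n ih =>
    intro t hl h a ha
    match t, ha with
    | .x :: t', ha =>
      rcases List.mem_cons.mp ha with rfl | ha
      · exact Or.inr rfl
      · exact ih t' (by simp at hl; omega) (irr_tail h) a ha
    | .y :: t', ha =>
      exact absurd rfl (h [] [.x, .y] t' (Or.inr (Or.inr (Or.inr rfl))))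
    | [.e], ha => simp at ha; subst ha; exact Or.inl rfl
    | .e :: .y :: t', ha =>
      exact absurd rfl (h [] [.x, .e, .y] t' (Or.inr (Or.inl rfl)))
    | .e :: .x :: t', ha =>
      rcases List.mem_cons.mp ha with rfl | ha
      · exact Or.inl rfl
      rcases List.mem_cons.mp ha with rfl | ha
      · exact Or.inr rfl
      · exact ih t' (by simp at hl; omega) (irr_tail (irr_tail h)) a ha
    | [.e, .e], ha =>
      simp at ha; rcases ha with rfl | rfl <;> exact Or.inl rfl
    | .e :: .e :: .y :: t', ha =>
      exact absurd rfl (h [] [.x, .e, .e, .y] t' (Or.inr (Or.inr (Or.inl rfl))))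
    | .e :: .e :: .e :: t', ha =>
      exact absurd rfl (h [.x] [.e, .e, .e] t' (Or.inl rfl))
    | .e :: .e :: .x :: t', ha =>
      rcases List.mem_cons.mp ha with rfl | ha
      · exact Or.inl rfl
      rcases List.mem_cons.mp ha with rfl | ha
      · exact Or.inl rfl
      rcases List.mem_cons.mp ha with rfl | ha
      · exact Or.inr rfl
      · exact ih t' (by simp at hl; omega) (irr_tail (irr_tail (irr_tail h))) a ha

/-! monoid equations -/

lemma mk_rel {a b : FreeMonoid Alpha} (h : rel a b) :
    PresentedMonoid.mk rel a = PresentedMonoid.mk rel b :=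
  Quotient.sound (ConGen.Rel.of a b h)

lemma eqE3 : E * E * E = E := mk_rel (Or.inl ⟨rfl, rfl⟩)
lemma eq_xey : X * E * Y = Y := mk_rel (Or.inr (Or.inl ⟨rfl, rfl⟩))
lemma eq_xeey : X * E * E * Y = X := mk_rel (Or.inr (Or.inr (Or.inl ⟨rfl, rfl⟩)))
lemma eq_xy : X * Y = 1 := mk_rel (Or.inr (Or.inr (Or.inr ⟨rfl, rfl⟩)))

def RInv (m : M) : Prop := ∃ q, m * q = 1

lemma rinv_mul {a b : M} (ha : RInv a) (hb : RInv b) : RInv (a * b) := by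
  obtain ⟨qa, ha⟩ := ha
  obtain ⟨qb, hb⟩ := hb
  exact ⟨qb * qa, by rw [mul_assoc, ← mul_assoc b, hb, one_mul, ha]⟩

lemma rinv_X : RInv X := ⟨Y, eq_xy⟩

lemma rinv_XE : RInv (X * E) := by
  refine ⟨E * Y * Y, ?_⟩
  have : X * E * (E * Y * Y) = X * E * E * Y * Y := by simp [mul_assoc]
  rw [this, eq_xeey, eq_xy]

lemma rinv_XEE : RInv (X * E * E) := by
  refine ⟨Y * Y, ?_⟩
  have : X * E * E * (Y * Y) = X * E * E * Y * Y := by simp [mul_assoc]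
  rw [this, eq_xeey, eq_xy]

lemma mk_cons (a : Alpha) (t : List Alpha) :
    PresentedMonoid.mk rel (.ofList (a :: t)) =
      PresentedMonoid.of rel a * PresentedMonoid.mk rel (.ofList t) := rfl

lemma rinv_main : ∀ (n : ℕ) (u : List Alpha), u.length ≤ n →
    (∀ a ∈ u, a = Alpha.e ∨ a = Alpha.x) →
    RInv (X * PresentedMonoid.mk rel (.ofList u)) := by
  intro n
  induction n with
  | zero =>
    intro u hl _
    have : u = [] := List.length_eq_zero_iff.mp (Nat.le_zero.mp hl)
    subst this
    rw [show PresentedMonoid.mk rel (.ofList ([] : List Alpha)) = 1 from rfl, mul_one]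
    exact rinv_X
  | succ n ih =>
    intro u hl hm
    match u, hm with
    | [], _ =>
      rw [show PresentedMonoid.mk rel (.ofList ([] : List Alpha)) = 1 from rfl, mul_one]
      exact rinv_X
    | .y :: v, hm => simp at hm
    | .x :: v, hm =>
      rw [mk_cons]
      exact rinv_mul rinv_X (ih v (by simp at hl; omega) (fun a ha => hm a (by simp [ha])))
    | [.e], hm =>
      rw [mk_cons, show PresentedMonoid.mk rel (.ofList ([] : List Alpha)) = 1 from rfl,
        mul_one]
      exact rinv_XE
    | .e :: .y :: v, hm => simp at hm
    | .e :: .x :: v, hm =>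
      rw [mk_cons, mk_cons, show PresentedMonoid.of rel Alpha.e = E from rfl,
        show PresentedMonoid.of rel Alpha.x = X from rfl, ← mul_assoc, ← mul_assoc]
      rw [mul_assoc (X * E)]
      exact rinv_mul rinv_XE (ih v (by simp at hl; omega)
        (fun a ha => hm a (by simp [ha])))
    | [.e, .e], hm =>
      rw [mk_cons, mk_cons, show PresentedMonoid.mk rel (.ofList ([] : List Alpha)) = 1 from rfl,
        mul_one, show PresentedMonoid.of rel Alpha.e = E from rfl, ← mul_assoc]
      exact rinv_XEE
    | .e :: .e :: .y :: v, hm => simp at hm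
    | .e :: .e :: .x :: v, hm =>
      rw [mk_cons, mk_cons, mk_cons, show PresentedMonoid.of rel Alpha.e = E from rfl,
        show PresentedMonoid.of rel Alpha.x = X from rfl, ← mul_assoc, ← mul_assoc,
        ← mul_assoc]
      rw [mul_assoc (X * E * E)]
      exact rinv_mul rinv_XEE (ih v (by simp at hl; omega)
        (fun a ha => hm a (by simp [ha])))
    | .e :: .e :: .e :: v, hm =>
      rw [mk_cons, mk_cons, mk_cons, show PresentedMonoid.of rel Alpha.e = E from rfl,
        ← mul_assoc, ← mul_assoc, ← mul_assoc]
      rw [show X * E * E * E = X * (E * E * E) from by simp [mul_assoc], eqE3, mul_assoc]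
      exact ih (.e :: v) (by simp at hl ⊢; omega) (fun a ha => hm a (by
        rcases List.mem_cons.mp ha with rfl | ha <;> simp [ha]))

def s0 : S := ⟨[], irr_nil⟩

lemma lift_cons (a : Alpha) (t : List Alpha) :
    FreeMonoid.lift F (FreeMonoid.ofList (a :: t)) =
      F a * FreeMonoid.lift F (FreeMonoid.ofList t) := by
  rw [show (FreeMonoid.ofList (a :: t)) = FreeMonoid.of a * FreeMonoid.ofList t from rfl,
    map_mul, FreeMonoid.lift_eval_of]

theorem main_list (L : List Alpha) (hirr : Irr L) :
    (∃ q' : M, PresentedMonoid.mk rel (.ofList L) * q' = 1) ↔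
    (L = [] ∨
      ((∃ u : List Alpha, (∀ a ∈ u, a = Alpha.e ∨ a = Alpha.x) ∧
          L = .x :: u) ∧
        ¬ ∃ p q : List Alpha, L = p ++ [.e, .e, .e] ++ q)) := by
  constructor
  · rintro ⟨q', hq⟩
    have h1 := congrArg phi hq
    rw [map_mul, map_one] at h1
    cases L with
    | nil => exact Or.inl rfl
    | cons a t =>
      cases a with
      | x =>
        refine Or.inr ⟨⟨t, ?_, rfl⟩, ?_⟩
        · exact noY_aux t.length t le_rfl hirr
        · rintro ⟨p, q, hpq⟩
          exact hirr p [.e,.e,.e] q (Or.inl rfl) hpq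
      | y =>
        rw [phi_mk, lift_cons] at h1
        have key := congrArg (fun f : Function.End S => (f s0).1) h1
        exact absurd key (List.cons_ne_nil _ _)
      | e =>
        rw [phi_mk, lift_cons] at h1
        have key := congrArg (fun f : Function.End S => (f s0).1) h1
        exact absurd key (fe_ne_nil _)
  · rintro (h1 | ⟨⟨u, hu, hwu⟩, -⟩)
    · subst h1
      exact ⟨1, by simp⟩
    · subst hwu
      obtain ⟨q, hqq⟩ := rinv_main u.length u le_rfl hu
      exact ⟨q, hqq⟩


/-- For irreducible `w`, the image of `w` in `M` is right-invertible iff `w` is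
empty or of the form `x·u` with `u ∈ {e,x}*` and `w` has no factor `e³`. -/
theorem stmt_8 (w : FreeMonoid Alpha) (hw : ¬ ∃ w' : FreeMonoid Alpha, Step w w') :
    (∃ q' : M, PresentedMonoid.mk rel w * q' = 1) ↔
    (w = 1 ∨
      ((∃ u : FreeMonoid Alpha, (∀ a ∈ u.toList, a = Alpha.e ∨ a = Alpha.x) ∧
          w = .of .x * u) ∧
        ¬ ∃ p q : FreeMonoid Alpha,
          w = p * (.of .e * .of .e * .of .e) * q)) :=
  main_list w.toList (irr_of_hw w hw)
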